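/- Let G be an ℓ-group and let {A_λ}_{λ∈Λ} be a family of convex ℓ-subgroups of G such that each A_λ, regarded as an ℓ-group, is abelian and is a Martínez ℓ-group. Then the join ⋁_{λ∈Λ} A_λ in the lattice of convex ℓ-subgroups of G (the smallest convex ℓ-subgroup containing all A_λ), regarded as an ℓ-group, is abelian and is a Martínez ℓ-group. Consequently, the class of abelian Martínez ℓ-groups is a radical class: it is closed under convex ℓ-subgroups, under ℓ-isomorphic images, and under joins of convex ℓ-subgroups. -/

import Mathlib

/-!
Common definitions for lattice-ordered groups (ℓ-groups), written additively.
An ℓ-group is modeled as `[Lattice G] [AddGroup G]` together with the two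
`CovariantClass` hypotheses expressing that translation is order-preserving.
-/

/-- The absolute value in an ℓ-group: `|g| = (g ⊔ 0) + ((-g) ⊔ 0)`. -/
def labs {G : Type*} [Lattice G] [AddGroup G] (g : G) : G := (g ⊔ 0) + (-g ⊔ 0)

/-- A convex ℓ-subgroup of `G`: a subgroup which is a sublattice and is convex. -/
def IsConvexLSubgroup {G : Type*} [Lattice G] [AddGroup G] (H : Set G) : Prop :=
  (0 : G) ∈ H ∧ (∀ a ∈ H, -a ∈ H) ∧ (∀ a ∈ H, ∀ b ∈ H, a + b ∈ H) ∧
  (∀ a ∈ H, ∀ b ∈ H, a ⊔ b ∈ H) ∧ (∀ a ∈ H, ∀ b ∈ H, a ⊓ b ∈ H) ∧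
  (∀ a ∈ H, ∀ b ∈ H, ∀ g : G, a ≤ g → g ≤ b → g ∈ H)

/-- The polar `g^⊥ = {h : |h| ⊓ |g| = 0}`. -/
def polar {G : Type*} [Lattice G] [AddGroup G] (g : G) : Set G :=
  {h : G | labs h ⊓ labs g = 0}

/-- The double polar `g^{⊥⊥} = (g^⊥)^⊥ = {h : ∀ k ∈ g^⊥, |h| ⊓ |k| = 0}`. -/
def biPolar {G : Type*} [Lattice G] [AddGroup G] (g : G) : Set G :=
  {h : G | ∀ k ∈ polar g, labs h ⊓ labs k = 0}

/-- A d-subgroup: a convex ℓ-subgroup containing the double polar of each of its elements. -/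
def IsDSubgroup {G : Type*} [Lattice G] [AddGroup G] (H : Set G) : Prop :=
  IsConvexLSubgroup H ∧ ∀ h ∈ H, biPolar h ⊆ H

/-- A Martínez ℓ-group: every convex ℓ-subgroup is a d-subgroup. -/
def Martinez (G : Type*) [Lattice G] [AddGroup G] : Prop :=
  ∀ H : Set G, IsConvexLSubgroup H → IsDSubgroup H

/-- `G(g)`, the smallest convex ℓ-subgroup of `G` containing `g`. -/
def principalCLS {G : Type*} [Lattice G] [AddGroup G] (g : G) : Set G :=
  {x : G | ∀ H : Set G, IsConvexLSubgroup H → g ∈ H → x ∈ H}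

/-- An ℓ-subgroup of `G`: a subgroup that is also a sublattice. -/
def IsLSubgroup {G : Type*} [Lattice G] [AddGroup G] (H : Set G) : Prop :=
  (0 : G) ∈ H ∧ (∀ a ∈ H, -a ∈ H) ∧ (∀ a ∈ H, ∀ b ∈ H, a + b ∈ H) ∧
  (∀ a ∈ H, ∀ b ∈ H, a ⊔ b ∈ H) ∧ (∀ a ∈ H, ∀ b ∈ H, a ⊓ b ∈ H)

/-- `K` is a convex ℓ-subgroup of the ℓ-group `H` (an ℓ-subgroup of `G`),
with convexity relative to `H`. -/
def IsConvexLSubgroupIn {G : Type*} [Lattice G] [AddGroup G] (H K : Set G) : Prop :=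
  K ⊆ H ∧ (0 : G) ∈ K ∧ (∀ a ∈ K, -a ∈ K) ∧ (∀ a ∈ K, ∀ b ∈ K, a + b ∈ K) ∧
  (∀ a ∈ K, ∀ b ∈ K, a ⊔ b ∈ K) ∧ (∀ a ∈ K, ∀ b ∈ K, a ⊓ b ∈ K) ∧
  (∀ a ∈ K, ∀ b ∈ K, ∀ g ∈ H, a ≤ g → g ≤ b → g ∈ K)

/-- The polar of `g` computed inside the ℓ-subgroup `H` of `G`. -/
def polarIn {G : Type*} [Lattice G] [AddGroup G] (H : Set G) (g : G) : Set G :=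
  {h ∈ H | labs h ⊓ labs g = 0}

/-- The double polar of `g` computed inside the ℓ-subgroup `H` of `G`. -/
def biPolarIn {G : Type*} [Lattice G] [AddGroup G] (H : Set G) (g : G) : Set G :=
  {h ∈ H | ∀ k ∈ polarIn H g, labs h ⊓ labs k = 0}

/-- The ℓ-subgroup `H` of `G`, regarded as an ℓ-group in its own right, is a
Martínez ℓ-group: every convex ℓ-subgroup of `H` is a d-subgroup of `H`. -/
def MartinezIn {G : Type*} [Lattice G] [AddGroup G] (H : Set G) : Prop :=
  ∀ K : Set G, IsConvexLSubgroupIn H K → ∀ h ∈ K, biPolarIn H h ⊆ K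

/-- The smallest convex ℓ-subgroup of `G` containing the set `S`; for
`S = G(x) ∪ G(y)` this is the join `G(x) ∨ G(y)` in the lattice of convex
ℓ-subgroups of `G`. -/
def clsGen {G : Type*} [Lattice G] [AddGroup G] (S : Set G) : Set G :=
  {x : G | ∀ K : Set G, IsConvexLSubgroup K → S ⊆ K → x ∈ K}

universe u v

section LGroupLemmas
set_option linter.unusedSectionVars false

variable {G : Type*} [Lattice G] [AddGroup G]
  [CovariantClass G G (· + ·) (· ≤ ·)]
  [CovariantClass G G (Function.swap (· + ·)) (· ≤ ·)]

lemma labs_eq_abs (g : G) : labs g = |g| := posPart_add_negPart g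

lemma labs_nonneg (g : G) : 0 ≤ labs g := by rw [labs_eq_abs]; exact abs_nonneg g

lemma le_labs_self (g : G) : g ≤ labs g := by rw [labs_eq_abs]; exact le_abs_self g

lemma neg_le_labs (g : G) : -g ≤ labs g := by rw [labs_eq_abs]; exact neg_le_abs g

lemma neg_labs_le (g : G) : -labs g ≤ g := by
  have h := neg_le_labs g
  have := neg_le_neg_iff.mpr h
  rwa [neg_neg] at this

lemma labs_le_iff {g c : G} : labs g ≤ c ↔ g ≤ c ∧ -g ≤ c := by
  rw [labs_eq_abs]; exact abs_le'

lemma labs_neg_eq (g : G) : labs (-g) = labs g := by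
  rw [labs_eq_abs, labs_eq_abs]; exact abs_neg g

lemma labs_of_nonneg {g : G} (h : 0 ≤ g) : labs g = g := by
  rw [labs_eq_abs]; exact abs_of_nonneg h

lemma labs_zero : labs (0 : G) = 0 := labs_of_nonneg le_rfl

lemma sup_eq_add_neg_inf_add (a b : G) : a ⊔ b = a + -(a ⊓ b) + b := by
  calc a ⊔ b = b ⊔ a := sup_comm a b
    _ = (0 + b) ⊔ (a - b + b) := by rw [zero_add, sub_add_cancel]
    _ = (0 ⊔ (a - b)) + b := (sup_add 0 (a - b) b).symm
    _ = ((a + -a) ⊔ (a + -b)) + b := by rw [add_neg_cancel, ← sub_eq_add_neg]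
    _ = (a + (-a ⊔ -b)) + b := by rw [add_sup]
    _ = a + -(a ⊓ b) + b := by rw [neg_inf]

lemma addCommute_of_inf_eq_zero {a b : G} (h : a ⊓ b = 0) : AddCommute a b := by
  have h1 : a ⊔ b = a + b := by
    rw [sup_eq_add_neg_inf_add, h, neg_zero, add_zero]
  have h2 : b ⊔ a = b + a := by
    rw [sup_eq_add_neg_inf_add, inf_comm b a, h, neg_zero, add_zero]
  show a + b = b + a
  rw [← h1, ← h2, sup_comm]

lemma riesz {g x y : G} (hg : 0 ≤ g) (hx : 0 ≤ x) (hy : 0 ≤ y) (hgxy : g ≤ x + y) :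
    ∃ u v : G, g = u + v ∧ 0 ≤ u ∧ u ≤ x ∧ 0 ≤ v ∧ v ≤ g ∧ v ≤ y := by
  refine ⟨g ⊓ x, -(g ⊓ x) + g, (add_neg_cancel_left _ _).symm,
    le_inf hg hx, inf_le_right, ?_, ?_, ?_⟩
  · have h := add_le_add_right (inf_le_left : g ⊓ x ≤ g) (-(g ⊓ x))
    rwa [neg_add_cancel] at h
  · have h0 : (0:G) ≤ g ⊓ x := le_inf hg hx
    calc -(g ⊓ x) + g ≤ -0 + g := add_le_add_left (neg_le_neg_iff.mpr h0) g
      _ = g := by rw [neg_zero, zero_add]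
  · have hxg : -x + g ≤ y := by
      have h := add_le_add_right hgxy (-x)
      rwa [neg_add_cancel_left] at h
    calc -(g ⊓ x) + g = (-g ⊔ -x) + g := by rw [neg_inf]
      _ = (-g + g) ⊔ (-x + g) := sup_add _ _ _
      _ = 0 ⊔ (-x + g) := by rw [neg_add_cancel]
      _ ≤ 0 ⊔ y := sup_le_sup_left hxg 0
      _ = y := sup_eq_right.mpr hy

lemma labs_add_le (a b : G) : labs (a + b) ≤ labs a + labs b + labs a := by
  rw [labs_le_iff]
  constructor
  · calc a + b ≤ labs a + labs b := add_le_add (le_labs_self a) (le_labs_self b)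
      _ ≤ labs a + labs b + labs a := le_add_of_nonneg_right (labs_nonneg a)
  · rw [neg_add_rev]
    calc -b + -a ≤ labs b + labs a := add_le_add (neg_le_labs b) (neg_le_labs a)
      _ ≤ labs a + (labs b + labs a) := le_add_of_nonneg_left (labs_nonneg a)
      _ = labs a + labs b + labs a := (add_assoc _ _ _).symm

lemma labs_sup_le (a b : G) : labs (a ⊔ b) ≤ labs a + labs b := by
  have h1 : a ≤ labs a + labs b :=
    (le_labs_self a).trans (le_add_of_nonneg_right (labs_nonneg b))
  have h2 : b ≤ labs a + labs b :=
    (le_labs_self b).trans (le_add_of_nonneg_left (labs_nonneg a))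
  rw [labs_le_iff]
  refine ⟨sup_le h1 h2, ?_⟩
  rw [neg_sup]
  exact inf_le_left.trans ((neg_le_labs a).trans
    (le_add_of_nonneg_right (labs_nonneg b)))

lemma labs_inf_le (a b : G) : labs (a ⊓ b) ≤ labs a + labs b := by
  have h1 : -a ≤ labs a + labs b :=
    (neg_le_labs a).trans (le_add_of_nonneg_right (labs_nonneg b))
  have h2 : -b ≤ labs a + labs b :=
    (neg_le_labs b).trans (le_add_of_nonneg_left (labs_nonneg a))
  rw [labs_le_iff]
  constructor
  · exact inf_le_left.trans ((le_labs_self a).trans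
      (le_add_of_nonneg_right (labs_nonneg b)))
  · rw [neg_inf]
    exact sup_le h1 h2

/-- `a = a⁺ - a⁻` in the `labs` language. -/
lemma eq_posPart_add_neg_negPart (a : G) : a = (a ⊔ 0) + -(-a ⊔ 0) := by
  have h := posPart_sub_negPart a
  rw [sub_eq_add_neg] at h
  exact h.symm

section ConvexHelpers

variable {K : Set G}

lemma labs_mem (hK : IsConvexLSubgroup K) {a : G} (ha : a ∈ K) : labs a ∈ K :=
  hK.2.2.1 _ (hK.2.2.2.1 a ha 0 hK.1) _ (hK.2.2.2.1 _ (hK.2.1 a ha) 0 hK.1)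

lemma mem_of_labs_mem (hK : IsConvexLSubgroup K) {a : G} (h : labs a ∈ K) : a ∈ K :=
  hK.2.2.2.2.2 _ (hK.2.1 _ h) _ h a (neg_labs_le a) (le_labs_self a)

lemma mem_of_nonneg_le (hK : IsConvexLSubgroup K) {a b : G}
    (h0 : 0 ≤ a) (hab : a ≤ b) (hb : b ∈ K) : a ∈ K :=
  hK.2.2.2.2.2 0 hK.1 b hb a h0 hab

lemma list_sum_nonneg' : ∀ {L : List G}, (∀ a ∈ L, 0 ≤ a) → 0 ≤ L.sum
  | [], _ => by simp
  | a :: t, h => by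
    rw [List.sum_cons]
    exact add_nonneg (h a (List.mem_cons_self))
      (list_sum_nonneg' fun b hb => h b (List.mem_cons_of_mem a hb))

lemma list_sum_mem' (hK : IsConvexLSubgroup K) :
    ∀ {L : List G}, (∀ a ∈ L, a ∈ K) → L.sum ∈ K
  | [], _ => by rw [List.sum_nil]; exact hK.1
  | a :: t, h => by
    rw [List.sum_cons]
    exact hK.2.2.1 a (h a (List.mem_cons_self)) _
      (list_sum_mem' hK fun b hb => h b (List.mem_cons_of_mem a hb))

end ConvexHelpers

lemma clsGen_isCLS (S : Set G) : IsConvexLSubgroup (clsGen S) := by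
  refine ⟨fun K hK _ => hK.1,
    fun a ha K hK hSK => hK.2.1 a (ha K hK hSK),
    fun a ha b hb K hK hSK => hK.2.2.1 a (ha K hK hSK) b (hb K hK hSK),
    fun a ha b hb K hK hSK => hK.2.2.2.1 a (ha K hK hSK) b (hb K hK hSK),
    fun a ha b hb K hK hSK => hK.2.2.2.2.1 a (ha K hK hSK) b (hb K hK hSK),
    fun a ha b hb g hag hgb K hK hSK =>
      hK.2.2.2.2.2 a (ha K hK hSK) b (hb K hK hSK) g hag hgb⟩

lemma subset_clsGen (S : Set G) : S ⊆ clsGen S :=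
  fun _ ha K _ hSK => hSK ha

end LGroupLemmas

section JoinLemmas
set_option linter.unusedSectionVars false

variable {G : Type*} [Lattice G] [AddGroup G]
  [CovariantClass G G (· + ·) (· ≤ ·)]
  [CovariantClass G G (Function.swap (· + ·)) (· ≤ ·)]
  {Λ : Type*} {A : Λ → Set G}

lemma A_subset_clsGen (l : Λ) : A l ⊆ clsGen (⋃ l : Λ, A l) :=
  fun a ha => subset_clsGen _ (Set.mem_iUnion.mpr ⟨l, ha⟩)

lemma dec_of_mem_clsGen (hA : ∀ l, IsConvexLSubgroup (A l)) {x : G}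
    (hx : x ∈ clsGen (⋃ l : Λ, A l)) :
    ∃ L : List G, (∀ a ∈ L, 0 ≤ a ∧ ∃ l, a ∈ A l) ∧ labs x ≤ L.sum := by
  refine hx {x : G | ∃ L : List G, (∀ a ∈ L, 0 ≤ a ∧ ∃ l, a ∈ A l) ∧ labs x ≤ L.sum} ?_ ?_
  · refine ⟨⟨[], by simp, by rw [List.sum_nil, labs_zero]⟩, ?_, ?_, ?_, ?_, ?_⟩
    · rintro a ⟨L, hL, hle⟩
      exact ⟨L, hL, by rwa [labs_neg_eq]⟩
    · rintro a ⟨L1, hL1, hle1⟩ b ⟨L2, hL2, hle2⟩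
      refine ⟨L1 ++ L2 ++ L1, ?_, ?_⟩
      · intro c hc
        rcases List.mem_append.mp hc with hc | hc
        · rcases List.mem_append.mp hc with hc | hc
          exacts [hL1 c hc, hL2 c hc]
        · exact hL1 c hc
      · calc labs (a + b) ≤ labs a + labs b + labs a := labs_add_le a b
          _ ≤ L1.sum + L2.sum + L1.sum := add_le_add (add_le_add hle1 hle2) hle1
          _ = (L1 ++ L2 ++ L1).sum := by rw [List.sum_append, List.sum_append]
    · rintro a ⟨L1, hL1, hle1⟩ b ⟨L2, hL2, hle2⟩
      refine ⟨L1 ++ L2, ?_, ?_⟩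
      · intro c hc
        rcases List.mem_append.mp hc with hc | hc
        exacts [hL1 c hc, hL2 c hc]
      · calc labs (a ⊔ b) ≤ labs a + labs b := labs_sup_le a b
          _ ≤ L1.sum + L2.sum := add_le_add hle1 hle2
          _ = (L1 ++ L2).sum := (List.sum_append).symm
    · rintro a ⟨L1, hL1, hle1⟩ b ⟨L2, hL2, hle2⟩
      refine ⟨L1 ++ L2, ?_, ?_⟩
      · intro c hc
        rcases List.mem_append.mp hc with hc | hc
        exacts [hL1 c hc, hL2 c hc]
      · calc labs (a ⊓ b) ≤ labs a + labs b := labs_inf_le a b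
          _ ≤ L1.sum + L2.sum := add_le_add hle1 hle2
          _ = (L1 ++ L2).sum := (List.sum_append).symm
    · rintro a ⟨L1, hL1, hle1⟩ b ⟨L2, hL2, hle2⟩ g hag hgb
      refine ⟨L2 ++ L1, ?_, ?_⟩
      · intro c hc
        rcases List.mem_append.mp hc with hc | hc
        exacts [hL2 c hc, hL1 c hc]
      · rw [labs_le_iff, List.sum_append]
        have hs1 : (0:G) ≤ L1.sum := list_sum_nonneg' fun c hc => (hL1 c hc).1
        have hs2 : (0:G) ≤ L2.sum := list_sum_nonneg' fun c hc => (hL2 c hc).1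
        constructor
        · exact (hgb.trans ((le_labs_self b).trans hle2)).trans
            (le_add_of_nonneg_right hs1)
        · have : -g ≤ -a := neg_le_neg_iff.mpr hag
          exact (this.trans ((neg_le_labs a).trans hle1)).trans
            (le_add_of_nonneg_left hs2)
  · rintro a ha
    obtain ⟨l, hal⟩ := Set.mem_iUnion.mp ha
    refine ⟨[labs a], ?_, by simp⟩
    intro c hc
    rw [List.mem_singleton] at hc
    subst hc
    exact ⟨labs_nonneg a, l, labs_mem (hA l) hal⟩

lemma mem_clsGen_of_dec {x : G}
    (hx : ∃ L : List G, (∀ a ∈ L, 0 ≤ a ∧ ∃ l, a ∈ A l) ∧ labs x ≤ L.sum) :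
    x ∈ clsGen (⋃ l : Λ, A l) := by
  obtain ⟨L, hL, hle⟩ := hx
  intro K hK hSK
  have hsum : L.sum ∈ K := list_sum_mem' hK fun a ha => by
    obtain ⟨_, l, hal⟩ := hL a ha
    exact hSK (Set.mem_iUnion.mpr ⟨l, hal⟩)
  exact mem_of_labs_mem hK (mem_of_nonneg_le hK (labs_nonneg x) hle hsum)

lemma decompose (hA : ∀ l, IsConvexLSubgroup (A l)) :
    ∀ (L : List G) {g : G}, 0 ≤ g → g ≤ L.sum → (∀ a ∈ L, 0 ≤ a ∧ ∃ l, a ∈ A l) →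
    ∃ M : List G, g = M.sum ∧ ∀ m ∈ M, 0 ≤ m ∧ m ≤ g ∧ ∃ l, m ∈ A l := by
  intro L
  induction L with
  | nil =>
    intro g hg hgs _
    exact ⟨[], le_antisymm (by simpa using hgs) hg, by simp⟩
  | cons a t ih =>
    intro g hg hgs hL
    obtain ⟨ha0, l, hal⟩ := hL a (List.mem_cons_self)
    have ht0 : (0:G) ≤ t.sum := list_sum_nonneg' fun b hb => (hL b (List.mem_cons_of_mem a hb)).1
    rw [List.sum_cons] at hgs
    obtain ⟨u, v, huv, hu0, hux, hv0, hvg, hvs⟩ := riesz hg ha0 ht0 hgs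
    obtain ⟨M, hM, hMp⟩ := ih hv0 hvs (fun b hb => hL b (List.mem_cons_of_mem a hb))
    refine ⟨u :: M, by rw [List.sum_cons, ← hM, huv], ?_⟩
    intro m hm
    rcases List.mem_cons.mp hm with rfl | hm'
    · refine ⟨hu0, by rw [huv]; exact le_add_of_nonneg_right hv0,
        l, mem_of_nonneg_le (hA l) hu0 hux hal⟩
    · obtain ⟨h1, h2, h3⟩ := hMp m hm'
      exact ⟨h1, h2.trans hvg, h3⟩

lemma cross_comm (hA : ∀ l, IsConvexLSubgroup (A l))
    (habel : ∀ l : Λ, ∀ a ∈ A l, ∀ b ∈ A l, a + b = b + a)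
    {a b : G} {l l' : Λ} (ha : a ∈ A l) (hb : b ∈ A l') (ha0 : 0 ≤ a) (hb0 : 0 ≤ b) :
    AddCommute a b := by
  set d := a ⊓ b with hd
  have hd0 : 0 ≤ d := le_inf ha0 hb0
  have hdl : d ∈ A l := mem_of_nonneg_le (hA l) hd0 inf_le_left ha
  have hdl' : d ∈ A l' := mem_of_nonneg_le (hA l') hd0 inf_le_right hb
  set a' := -d + a with ha'
  set b' := -d + b with hb'
  have ha'l : a' ∈ A l := (hA l).2.2.1 _ ((hA l).2.1 _ hdl) _ ha
  have hb'l : b' ∈ A l' := (hA l').2.2.1 _ ((hA l').2.1 _ hdl') _ hb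
  have hinf : a' ⊓ b' = 0 := by
    rw [ha', hb', ← add_inf, ← hd, neg_add_cancel]
  have cab : AddCommute a' b' := addCommute_of_inf_eq_zero hinf
  have cda' : AddCommute d a' := habel l d hdl a' ha'l
  have cdb' : AddCommute d b' := habel l' d hdl' b' hb'l
  have ea : a = d + a' := by rw [ha', add_neg_cancel_left]
  have eb : b = d + b' := by rw [hb', add_neg_cancel_left]
  have key : AddCommute (d + a') (d + b') :=
    ((AddCommute.refl d).add_right cdb').add_left ((cda'.symm).add_right cab)
  rw [ea, eb]
  exact key

lemma comm_of_decomp (hA : ∀ l, IsConvexLSubgroup (A l))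
    (habel : ∀ l : Λ, ∀ a ∈ A l, ∀ b ∈ A l, a + b = b + a)
    {x y : G} {M N : List G}
    (hx : x = M.sum) (hM : ∀ m ∈ M, 0 ≤ m ∧ ∃ l, m ∈ A l)
    (hy : y = N.sum) (hN : ∀ n ∈ N, 0 ≤ n ∧ ∃ l, n ∈ A l) :
    AddCommute x y := by
  subst hx hy
  refine AddCommute.list_sum_right N _ fun n hn => ?_
  refine (AddCommute.list_sum_right M _ fun m hm => ?_).symm
  obtain ⟨hn0, l', hnl⟩ := hN n hn
  obtain ⟨hm0, l, hml⟩ := hM m hm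
  exact cross_comm hA habel hnl hml hn0 hm0

lemma pos_decomp_of_mem_clsGen (hA : ∀ l, IsConvexLSubgroup (A l)) {x : G}
    (hx : x ∈ clsGen (⋃ l : Λ, A l)) (hx0 : 0 ≤ x) :
    ∃ M : List G, x = M.sum ∧ ∀ m ∈ M, 0 ≤ m ∧ m ≤ x ∧ ∃ l, m ∈ A l := by
  obtain ⟨L, hL, hle⟩ := dec_of_mem_clsGen hA hx
  rw [labs_of_nonneg hx0] at hle
  exact decompose hA L hx0 hle hL

lemma clsGen_comm (hA : ∀ l, IsConvexLSubgroup (A l))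
    (habel : ∀ l : Λ, ∀ a ∈ A l, ∀ b ∈ A l, a + b = b + a)
    {a b : G} (ha : a ∈ clsGen (⋃ l : Λ, A l)) (hb : b ∈ clsGen (⋃ l : Λ, A l)) :
    a + b = b + a := by
  have hJ : IsConvexLSubgroup (clsGen (⋃ l : Λ, A l)) := clsGen_isCLS _
  have hap : a ⊔ 0 ∈ clsGen (⋃ l : Λ, A l) := hJ.2.2.2.1 a ha 0 hJ.1
  have han : -a ⊔ 0 ∈ clsGen (⋃ l : Λ, A l) := hJ.2.2.2.1 _ (hJ.2.1 a ha) 0 hJ.1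
  have hbp : b ⊔ 0 ∈ clsGen (⋃ l : Λ, A l) := hJ.2.2.2.1 b hb 0 hJ.1
  have hbn : -b ⊔ 0 ∈ clsGen (⋃ l : Λ, A l) := hJ.2.2.2.1 _ (hJ.2.1 b hb) 0 hJ.1
  obtain ⟨Map, hap1, hap2⟩ := pos_decomp_of_mem_clsGen hA hap le_sup_right
  obtain ⟨Man, han1, han2⟩ := pos_decomp_of_mem_clsGen hA han le_sup_right
  obtain ⟨Mbp, hbp1, hbp2⟩ := pos_decomp_of_mem_clsGen hA hbp le_sup_right
  obtain ⟨Mbn, hbn1, hbn2⟩ := pos_decomp_of_mem_clsGen hA hbn le_sup_right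
  have cpp : AddCommute (a ⊔ 0) (b ⊔ 0) := comm_of_decomp hA habel hap1
    (fun m hm => ⟨(hap2 m hm).1, (hap2 m hm).2.2⟩) hbp1
    (fun m hm => ⟨(hbp2 m hm).1, (hbp2 m hm).2.2⟩)
  have cpn : AddCommute (a ⊔ 0) (-b ⊔ 0) := comm_of_decomp hA habel hap1
    (fun m hm => ⟨(hap2 m hm).1, (hap2 m hm).2.2⟩) hbn1
    (fun m hm => ⟨(hbn2 m hm).1, (hbn2 m hm).2.2⟩)
  have cnp : AddCommute (-a ⊔ 0) (b ⊔ 0) := comm_of_decomp hA habel han1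
    (fun m hm => ⟨(han2 m hm).1, (han2 m hm).2.2⟩) hbp1
    (fun m hm => ⟨(hbp2 m hm).1, (hbp2 m hm).2.2⟩)
  have cnn : AddCommute (-a ⊔ 0) (-b ⊔ 0) := comm_of_decomp hA habel han1
    (fun m hm => ⟨(han2 m hm).1, (han2 m hm).2.2⟩) hbn1
    (fun m hm => ⟨(hbn2 m hm).1, (hbn2 m hm).2.2⟩)
  have key : AddCommute ((a ⊔ 0) + -(-a ⊔ 0)) ((b ⊔ 0) + -(-b ⊔ 0)) :=
    (cpp.add_right cpn.neg_right).add_left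
      ((cnp.neg_left).add_right (cnn.neg_left.neg_right))
  rw [eq_posPart_add_neg_negPart a, eq_posPart_add_neg_negPart b]
  exact key

end JoinLemmas

section MartinezLemmas
set_option linter.unusedSectionVars false

variable {G : Type*} [Lattice G] [AddGroup G]
  [CovariantClass G G (· + ·) (· ≤ ·)]
  [CovariantClass G G (Function.swap (· + ·)) (· ≤ ·)]

/-- `labs` of an element of a relative convex ℓ-subgroup is in it. -/
lemma labs_mem_In {H K : Set G} (hK : IsConvexLSubgroupIn H K) {a : G} (ha : a ∈ K) :
    labs a ∈ K :=
  hK.2.2.2.1 _ (hK.2.2.2.2.1 a ha 0 hK.2.1) _ (hK.2.2.2.2.1 _ (hK.2.2.1 a ha) 0 hK.2.1)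

section Join
variable {Λ : Type*} {A : Λ → Set G}

lemma clsGen_martinezIn (hA : ∀ l, IsConvexLSubgroup (A l))
    (hmart : ∀ l, MartinezIn (A l)) : MartinezIn (clsGen (⋃ l : Λ, A l)) := by
  intro K hK h hh x hx
  have hJ : IsConvexLSubgroup (clsGen (⋃ l : Λ, A l)) := clsGen_isCLS _
  obtain ⟨hxJ, hxpol⟩ := hx
  have key : ∀ z : G, 0 ≤ z → z ∈ clsGen (⋃ l : Λ, A l) →
      (∀ k ∈ polarIn (clsGen (⋃ l : Λ, A l)) h, labs z ⊓ labs k = 0) → z ∈ K := by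
    intro z hz0 hzJ hzpol
    obtain ⟨M, hMsum, hM⟩ := pos_decomp_of_mem_clsGen hA hzJ hz0
    have hmemK : ∀ m ∈ M, m ∈ K := by
      intro m hm
      obtain ⟨hm0, hmz, l, hml⟩ := hM m hm
      have hmJ : m ∈ clsGen (⋃ l : Λ, A l) := mem_of_nonneg_le hJ hm0 hmz hzJ
      set h' := labs h ⊓ m with hh'def
      have hh'0 : 0 ≤ h' := le_inf (labs_nonneg h) hm0
      have hh'A : h' ∈ A l := mem_of_nonneg_le (hA l) hh'0 inf_le_right hml
      have hh'J : h' ∈ clsGen (⋃ l : Λ, A l) := A_subset_clsGen l hh'A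
      have hlabshK : labs h ∈ K := labs_mem_In hK hh
      have hh'K : h' ∈ K :=
        hK.2.2.2.2.2.2 0 hK.2.1 (labs h) hlabshK h' hh'J hh'0 inf_le_left
      -- K' = K ∩ A l is a convex ℓ-subgroup of A l
      have hK' : IsConvexLSubgroupIn (A l) {y | y ∈ K ∧ y ∈ A l} := by
        refine ⟨fun y hy => hy.2, ⟨hK.2.1, (hA l).1⟩,
          fun a ha => ⟨hK.2.2.1 a ha.1, (hA l).2.1 a ha.2⟩,
          fun a ha b hb => ⟨hK.2.2.2.1 a ha.1 b hb.1, (hA l).2.2.1 a ha.2 b hb.2⟩,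
          fun a ha b hb => ⟨hK.2.2.2.2.1 a ha.1 b hb.1, (hA l).2.2.2.1 a ha.2 b hb.2⟩,
          fun a ha b hb => ⟨hK.2.2.2.2.2.1 a ha.1 b hb.1, (hA l).2.2.2.2.1 a ha.2 b hb.2⟩,
          ?_⟩
        intro a ha b hb g hg hag hgb
        exact ⟨hK.2.2.2.2.2.2 a ha.1 b hb.1 g (A_subset_clsGen l hg) hag hgb, hg⟩
      have hmbp : m ∈ biPolarIn (A l) h' := by
        refine ⟨hml, ?_⟩
        intro k hk
        obtain ⟨hkA, hk0⟩ := hk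
        rw [labs_of_nonneg hh'0] at hk0
        set w := m ⊓ labs k with hwdef
        have hw0 : 0 ≤ w := le_inf hm0 (labs_nonneg k)
        have hwJ : w ∈ clsGen (⋃ l : Λ, A l) := mem_of_nonneg_le hJ hw0 inf_le_left hmJ
        have hwh : labs w ⊓ labs h = 0 := by
          have hle : w ⊓ labs h ≤ labs k ⊓ h' :=
            le_inf (le_trans inf_le_left inf_le_right)
              (le_inf inf_le_right (le_trans inf_le_left inf_le_left))
          rw [labs_of_nonneg hw0]
          exact le_antisymm (hk0 ▸ hle) (le_inf hw0 (labs_nonneg h))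
        have hzw := hzpol w ⟨hwJ, hwh⟩
        rw [labs_of_nonneg hz0, labs_of_nonneg hw0] at hzw
        have hwle : w ≤ z := le_trans inf_le_left hmz
        have hw_eq : w = 0 := by
          have : z ⊓ w = w := inf_eq_right.mpr hwle
          rw [← this, hzw]
        rw [labs_of_nonneg hm0]
        exact hw_eq
      exact (hmart l {y | y ∈ K ∧ y ∈ A l} hK' h' ⟨hh'K, hh'A⟩ hmbp).1
    rw [hMsum]
    -- sum of elements of K is in K
    clear hMsum hM
    induction M with
    | nil => simpa using hK.2.1
    | cons a t ih =>
      rw [List.sum_cons]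
      exact hK.2.2.2.1 a (hmemK a (List.mem_cons_self)) _
        (ih fun b hb => hmemK b (List.mem_cons_of_mem a hb))
  have hlx : labs x ∈ K := by
    refine key (labs x) (labs_nonneg x) (labs_mem hJ hxJ) ?_
    intro k hk
    rw [labs_of_nonneg (labs_nonneg x)]
    exact hxpol k hk
  exact hK.2.2.2.2.2.2 _ (hK.2.2.1 _ hlx) _ hlx x hxJ (neg_labs_le x) (le_labs_self x)

end Join

/-- Part (b): a convex ℓ-subgroup of a Martínez ℓ-group is Martínez (as an ℓ-group). -/
lemma martinezIn_of_martinez {H : Set G} (hGm : Martinez G)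
    (hH : IsConvexLSubgroup H) : MartinezIn H := by
  intro K hK h hh x hx
  obtain ⟨hxH, hxpol⟩ := hx
  have hKG : IsConvexLSubgroup K := by
    refine ⟨hK.2.1, hK.2.2.1, hK.2.2.2.1, hK.2.2.2.2.1, hK.2.2.2.2.2.1, ?_⟩
    intro a ha b hb g hag hgb
    have hgH : g ∈ H := hH.2.2.2.2.2 a (hK.1 ha) b (hK.1 hb) g hag hgb
    exact hK.2.2.2.2.2.2 a ha b hb g hgH hag hgb
  refine (hGm K hKG).2 h hh ?_
  intro k hk
  set w := labs x ⊓ labs k with hwdef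
  have hw0 : 0 ≤ w := le_inf (labs_nonneg x) (labs_nonneg k)
  have hwH : w ∈ H := mem_of_nonneg_le hH hw0 inf_le_left (labs_mem hH hxH)
  have hwh : labs w ⊓ labs h = 0 := by
    rw [labs_of_nonneg hw0]
    refine le_antisymm ?_ (le_inf hw0 (labs_nonneg h))
    have hle : labs x ⊓ labs k ⊓ labs h ≤ labs k ⊓ labs h :=
      inf_le_inf_right _ inf_le_right
    exact hk ▸ hle
  have hxw := hxpol w ⟨hwH, hwh⟩
  rw [labs_of_nonneg hw0] at hxw
  have hwle : w ≤ labs x := inf_le_left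
  have : w = 0 := by
    have h2 : labs x ⊓ w = w := inf_eq_right.mpr hwle
    rw [← h2, hxw]
  exact this

end MartinezLemmas

section IsoLemmas
set_option linter.unusedSectionVars false

variable {G : Type u} [Lattice G] [AddGroup G]
  [CovariantClass G G (· + ·) (· ≤ ·)]
  [CovariantClass G G (Function.swap (· + ·)) (· ≤ ·)]
  {H : Type v} [Lattice H] [AddGroup H]
  [CovariantClass H H (· + ·) (· ≤ ·)]
  [CovariantClass H H (Function.swap (· + ·)) (· ≤ ·)]

lemma iso_transfer (f : G ≃ H)
    (hadd : ∀ x y : G, f (x + y) = f x + f y)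
    (hsup : ∀ x y : G, f (x ⊔ y) = f x ⊔ f y)
    (hinf : ∀ x y : G, f (x ⊓ y) = f x ⊓ f y)
    (hab : ∀ a b : G, a + b = b + a) (hGm : Martinez G) :
    (∀ a b : H, a + b = b + a) ∧ Martinez H := by
  have hzero : f 0 = 0 := by
    have h := hadd 0 0
    rw [add_zero] at h
    exact left_eq_add.mp h
  have hneg : ∀ x : G, f (-x) = -f x := by
    intro x
    have h : f x + f (-x) = 0 := by rw [← hadd, add_neg_cancel, hzero]
    exact (neg_eq_of_add_eq_zero_right h).symm
  have hlabs : ∀ x : G, f (labs x) = labs (f x) := by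
    intro x
    show f ((x ⊔ 0) + (-x ⊔ 0)) = (f x ⊔ 0) + (-f x ⊔ 0)
    rw [hadd, hsup, hsup, hzero, hneg]
  constructor
  · intro a b
    have h := hab (f.symm a) (f.symm b)
    have := congrArg f h
    rw [hadd, hadd, f.apply_symm_apply, f.apply_symm_apply] at this
    exact this
  · intro K hK
    set K' : Set G := f ⁻¹' K with hK'def
    have hK' : IsConvexLSubgroup K' := by
      refine ⟨?_, ?_, ?_, ?_, ?_, ?_⟩
      · show f 0 ∈ K
        rw [hzero]; exact hK.1
      · intro a ha
        show f (-a) ∈ K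
        rw [hneg]; exact hK.2.1 _ ha
      · intro a ha b hb
        show f (a + b) ∈ K
        rw [hadd]; exact hK.2.2.1 _ ha _ hb
      · intro a ha b hb
        show f (a ⊔ b) ∈ K
        rw [hsup]; exact hK.2.2.2.1 _ ha _ hb
      · intro a ha b hb
        show f (a ⊓ b) ∈ K
        rw [hinf]; exact hK.2.2.2.2.1 _ ha _ hb
      · intro a ha b hb g hag hgb
        have hmono : ∀ x y : G, x ≤ y → f x ≤ f y := by
          intro x y hxy
          have : f (x ⊔ y) = f y := by rw [sup_eq_right.mpr hxy]
          rw [hsup] at this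
          exact sup_eq_right.mp this
        exact hK.2.2.2.2.2 _ ha _ hb (f g) (hmono a g hag) (hmono g b hgb)
    refine ⟨hK, ?_⟩
    intro h hh x hx
    have hxk : f.symm x ∈ biPolar (f.symm h) := by
      intro k hk
      have hfk : f k ∈ polar h := by
        show labs (f k) ⊓ labs h = 0
        have := congrArg f hk
        rw [hinf, hlabs, hlabs, hzero, f.apply_symm_apply] at this
        exact this
      have := hx (f k) hfk
      have h2 := congrArg f.symm this
      have hfsymm0 : f.symm 0 = 0 := by rw [← hzero, f.symm_apply_apply]
      rw [hfsymm0] at h2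
      rw [← h2]
      have : f (labs (f.symm x) ⊓ labs k) = labs x ⊓ labs (f k) := by
        rw [hinf, hlabs, hlabs, f.apply_symm_apply]
      rw [← this, f.symm_apply_apply]
    have hhK' : f.symm h ∈ K' := by
      show f (f.symm h) ∈ K
      rw [f.apply_symm_apply]; exact hh
    have := (hGm K' hK').2 (f.symm h) hhK' hxk
    have hxK : f (f.symm x) ∈ K := this
    rwa [f.apply_symm_apply] at hxK

end IsoLemmas


/-- (a) a join of convex ℓ-subgroups each of which is an abelian
Martínez ℓ-group is an abelian Martínez ℓ-group; consequently the class of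
abelian Martínez ℓ-groups is a radical class, being also (b) closed under
convex ℓ-subgroups and (c) closed under ℓ-isomorphic images. -/
theorem stmt_14 :
    (∀ (G : Type u) [Lattice G] [AddGroup G]
        [CovariantClass G G (· + ·) (· ≤ ·)]
        [CovariantClass G G (Function.swap (· + ·)) (· ≤ ·)]
        (Λ : Type v) (A : Λ → Set G),
        (∀ l : Λ, IsConvexLSubgroup (A l)) →
        (∀ l : Λ, ∀ a ∈ A l, ∀ b ∈ A l, a + b = b + a) →
        (∀ l : Λ, MartinezIn (A l)) →
        (∀ a ∈ clsGen (⋃ l : Λ, A l), ∀ b ∈ clsGen (⋃ l : Λ, A l), a + b = b + a) ∧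
          MartinezIn (clsGen (⋃ l : Λ, A l)))
    ∧
    (∀ (G : Type u) [Lattice G] [AddGroup G]
        [CovariantClass G G (· + ·) (· ≤ ·)]
        [CovariantClass G G (Function.swap (· + ·)) (· ≤ ·)]
        (H : Set G),
        (∀ a b : G, a + b = b + a) → Martinez G → IsConvexLSubgroup H →
        (∀ a ∈ H, ∀ b ∈ H, a + b = b + a) ∧ MartinezIn H)
    ∧
    (∀ (G : Type u) [Lattice G] [AddGroup G]
        [CovariantClass G G (· + ·) (· ≤ ·)]
        [CovariantClass G G (Function.swap (· + ·)) (· ≤ ·)]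
        (H : Type v) [Lattice H] [AddGroup H]
        [CovariantClass H H (· + ·) (· ≤ ·)]
        [CovariantClass H H (Function.swap (· + ·)) (· ≤ ·)]
        (f : G ≃ H),
        (∀ x y : G, f (x + y) = f x + f y) →
        (∀ x y : G, f (x ⊔ y) = f x ⊔ f y) →
        (∀ x y : G, f (x ⊓ y) = f x ⊓ f y) →
        (∀ a b : G, a + b = b + a) → Martinez G →
        (∀ a b : H, a + b = b + a) ∧ Martinez H) := by
  refine ⟨?_, ?_, ?_⟩
  · intro G _ _ _ _ Λ A hA habel hmart
    exact ⟨fun a ha b hb => clsGen_comm hA habel ha hb, clsGen_martinezIn hA hmart⟩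
  · intro G _ _ _ _ H hab hGm hH
    exact ⟨fun a _ b _ => hab a b, martinezIn_of_martinez hGm hH⟩
  · intro G _ _ _ _ H _ _ _ _ f hadd hsup hinf hab hGm
    exact iso_transfer f hadd hsup hinf hab hGm
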